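/- For A, B, a > 0 with real ν > -1/2 and A - B ≤ 1 (in the real setting), ∫₀^∞ I_ν(Ax) e^{-Bx} x^{-1/2} e^{-x} dx = (2^{-ν}/√(1+B)) (A²/(1+B)²)^{ν/2} (Γ(1/2+ν)/Γ(1+ν)) · ₂F₁((1+2ν)/4, (3+2ν)/4; 1+ν; A²/(1+B)²), where ₂F₁ is the Gauss hypergeometric function and I_ν the modified Bessel function of the first kind. -/

import Mathlib

open Real Finset MeasureTheory

/-- Modified Bessel function of the first kind (real version),
`I_ν(x) = Σ (1/(m! Γ(m+ν+1))) (x/2)^{2m+ν}`. -/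
noncomputable def besselI (ν : ℝ) (x : ℝ) : ℝ :=
  ∑' m : ℕ, (1 / ((m.factorial : ℝ) * Real.Gamma ((m : ℝ) + ν + 1))) *
    (x/2) ^ (2*(m:ℝ) + ν)

/-- The rising factorial (Pochhammer symbol) `(a)_k = a(a+1)⋯(a+k-1)`. -/
noncomputable def risingFac (a : ℝ) (k : ℕ) : ℝ := ∏ j ∈ Finset.range k, (a + j)

/-- The Gauss hypergeometric function `₂F₁(a,b;c;z)`. -/
noncomputable def hyp2F1 (a b c z : ℝ) : ℝ :=
  ∑' k : ℕ, risingFac a k * risingFac b k / (risingFac c k * (k.factorial : ℝ)) * z^k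

open Filter Topology

/-!
Expand `I_ν(Ax)` in its power series. After the two exponentials are combined, the `m`-th term of
the integrand is a constant times `x ^ (2m + ν - 1/2) * exp (-(1 + B) x)`, whose integral is
`Γ(2m + ν + 1/2) / (1 + B) ^ (2m + ν + 1/2)`. All terms are nonnegative, so the series may be
integrated termwise, and the Pochhammer form `(s)_{2m} = 4^m (s/2)_m ((s+1)/2)_m` of Legendre's
duplication formula turns `Γ(2m + ν + 1/2) / Γ(m + ν + 1)` into the hypergeometric coefficient
`((1+2ν)/4)_m ((3+2ν)/4)_m / (1+ν)_m` up to a factor independent of `m`.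
-/

lemma risingFac_succ (a : ℝ) (k : ℕ) : risingFac a (k + 1) = risingFac a k * (a + k) :=
  prod_range_succ _ k

lemma risingFac_two_mul (a : ℝ) (k : ℕ) :
    risingFac a (2 * k) = 4 ^ k * risingFac (a / 2) k * risingFac ((a + 1) / 2) k := by
  induction k with
  | zero => simp [risingFac]
  | succ k ih =>
    rw [show 2 * (k + 1) = 2 * k + 1 + 1 by ring, risingFac_succ, risingFac_succ, ih,
      risingFac_succ, risingFac_succ]
    push_cast
    ring

lemma Real.Gamma_add_natCast_eq_mul_risingFac {a : ℝ} (ha : 0 < a) (k : ℕ) :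
    Gamma (a + k) = Gamma a * risingFac a k := by
  induction k with
  | zero => simp [risingFac]
  | succ k ih =>
    rw [Nat.cast_succ, ← add_assoc, Gamma_add_one (by positivity), ih, risingFac_succ]
    ring

lemma Real.Gamma_add_two_mul_natCast {s : ℝ} (hs : 0 < s) (m : ℕ) :
    Gamma (s + 2 * m) = Gamma s * 4 ^ m * risingFac (s / 2) m * risingFac ((s + 1) / 2) m := by
  have := Gamma_add_natCast_eq_mul_risingFac hs (2 * m)
  push_cast at this
  rw [this, risingFac_two_mul]
  ring

lemma rpow_two_mul_natCast_add {x : ℝ} (hx : 0 < x) (m : ℕ) (s : ℝ) :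
    x ^ (2 * m + s) = (x ^ 2) ^ m * x ^ s := by
  rw [rpow_add hx, ← pow_mul, ← rpow_natCast]
  push_cast
  rfl

lemma div_two_rpow_mul_one_div_rpow_mul_four_pow {A K : ℝ} (hA : 0 < A) (hK : 0 < K) (ν : ℝ)
    (m : ℕ) :
    (A / 2) ^ (2 * m + ν) * (1 / K) ^ (2 * m + ν + 1 / 2) * 4 ^ m =
      2 ^ (-ν) / √K * (A ^ 2 / K ^ 2) ^ (ν / 2) * (A ^ 2 / K ^ 2) ^ m := by
  have hsq : (A ^ 2 / K ^ 2) ^ (ν / 2) = A ^ ν / K ^ ν := by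
    rw [← div_pow, ← rpow_natCast, ← rpow_mul (by positivity), Nat.cast_ofNat,
      mul_div_cancel₀ ν two_ne_zero, div_rpow hA.le hK.le]
  have hK' : 0 < K ^ ν := rpow_pos_of_pos hK ν
  have h2 : 0 < (2 : ℝ) ^ ν := rpow_pos_of_pos two_pos ν
  rw [rpow_two_mul_natCast_add (by positivity), add_assoc,
    rpow_two_mul_natCast_add (by positivity), rpow_add (by positivity),
    div_rpow hA.le zero_le_two, div_rpow zero_le_one hK.le, div_rpow zero_le_one hK.le, one_rpow,
    one_rpow, ← sqrt_eq_rpow, rpow_neg zero_le_two, hsq]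
  field_simp
  rw [← mul_pow, ← mul_pow]
  congr 1
  field_simp
  norm_num

/-- No finiteness is assumed: if `∑ n, ∫ F n` diverges, both sides are the junk value `0`. -/
theorem integral_tsum_of_nonneg {α : Type*} [MeasurableSpace α] {μ : Measure α}
    {F : ℕ → α → ℝ} (hF : ∀ n, Integrable (F n) μ) (hF₀ : ∀ n, 0 ≤ᵐ[μ] F n)
    (hsum : ∀ᵐ x ∂μ, Summable fun n ↦ F n x) :
    ∫ x, ∑' n, F n x ∂μ = ∑' n, ∫ x, F n x ∂μ := by
  have h₀ : ∀ᵐ x ∂μ, ∀ n, 0 ≤ F n x := ae_all_iff.2 hF₀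
  have hmeas : AEStronglyMeasurable (fun x ↦ ∑' n, F n x) μ :=
    aestronglyMeasurable_of_tendsto_ae atTop
      (fun n ↦ Finset.aestronglyMeasurable_fun_sum (range n) fun i _ ↦ (hF i).1)
      (hsum.mono fun x hx ↦ hx.hasSum.tendsto_sum_nat)
  have hlint : ∫⁻ x, ENNReal.ofReal (∑' n, F n x) ∂μ =
      ∑' n, ∫⁻ x, ENNReal.ofReal (F n x) ∂μ := by
    rw [← lintegral_tsum fun n ↦ (hF n).1.aemeasurable.ennreal_ofReal]
    exact lintegral_congr_ae
      ((h₀.and hsum).mono fun x hx ↦ ENNReal.ofReal_tsum_of_nonneg hx.1 hx.2)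
  rw [integral_eq_lintegral_of_nonneg_ae (h₀.mono fun x hx ↦ tsum_nonneg hx) hmeas, hlint,
    ENNReal.tsum_toReal_eq fun n ↦ (hF n).lintegral_lt_top.ne]
  exact tsum_congr fun n ↦ (integral_eq_lintegral_of_nonneg_ae (hF₀ n) (hF n).1).symm

noncomputable def besselITerm (ν : ℝ) (m : ℕ) (x : ℝ) : ℝ :=
  1 / ((m.factorial : ℝ) * Gamma (m + ν + 1)) * (x / 2) ^ (2 * (m : ℝ) + ν)

lemma besselI_eq_tsum (ν x : ℝ) : besselI ν x = ∑' m, besselITerm ν m x := rfl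

lemma besselITerm_pos {ν : ℝ} (hν : -1 < ν) (m : ℕ) {x : ℝ} (hx : 0 < x) :
    0 < besselITerm ν m x := by
  have : 0 < Gamma (m + ν + 1) := Gamma_pos_of_pos (by linarith [m.cast_nonneg (α := ℝ)])
  unfold besselITerm
  positivity

lemma besselITerm_succ {ν : ℝ} (hν : -1 < ν) (m : ℕ) {x : ℝ} (hx : 0 < x) :
    besselITerm ν (m + 1) x = besselITerm ν m x * ((x / 2) ^ 2 / ((m + 1) * (m + ν + 1))) := by
  have hm : 0 < (m : ℝ) + ν + 1 := by linarith [m.cast_nonneg (α := ℝ)]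
  have hpow : (x / 2) ^ (2 * ((m + 1 : ℕ) : ℝ) + ν) =
      (x / 2) ^ (2 * (m : ℝ) + ν) * (x / 2) ^ 2 := by
    rw [← rpow_natCast, ← rpow_add (by positivity)]
    push_cast
    ring_nf
  unfold besselITerm
  rw [hpow, Nat.factorial_succ, Nat.cast_add_one, add_right_comm _ 1 ν, Gamma_add_one hm.ne']
  push_cast
  field_simp

lemma summable_besselITerm {ν : ℝ} (hν : -1 < ν) {x : ℝ} (hx : 0 < x) :
    Summable fun m ↦ besselITerm ν m x := by
  refine summable_of_ratio_test_tendsto_lt_one zero_lt_one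
    (Eventually.of_forall fun m ↦ (besselITerm_pos hν m hx).ne') ?_
  have hden : Tendsto (fun m : ℕ ↦ ((m : ℝ) + 1) * (m + ν + 1)) atTop atTop :=
    (tendsto_atTop_add_const_right _ 1 tendsto_natCast_atTop_atTop).atTop_mul_atTop₀
      (tendsto_atTop_add_const_right _ _
        (tendsto_atTop_add_const_right _ ν tendsto_natCast_atTop_atTop))
  refine (hden.const_div_atTop ((x / 2) ^ 2)).congr fun m ↦ ?_
  have hm : 0 < (m : ℝ) + ν + 1 := by linarith [m.cast_nonneg (α := ℝ)]
  rw [besselITerm_succ hν m hx, norm_mul,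
    mul_div_cancel_left₀ _ (norm_ne_zero_iff.2 (besselITerm_pos hν m hx).ne'),
    Real.norm_of_nonneg (by positivity)]

lemma besselITerm_mul_right {A x : ℝ} (hA : 0 ≤ A) (hx : 0 ≤ x) (ν : ℝ) (m : ℕ) :
    besselITerm ν m (A * x) = besselITerm ν m A * x ^ (2 * (m : ℝ) + ν) := by
  unfold besselITerm
  rw [mul_div_right_comm, mul_rpow (by positivity) hx, mul_assoc]

lemma eqOn_besselITerm_mul_rpow_mul_exp {ν A K : ℝ} (hA : 0 ≤ A) (m : ℕ) :
    Set.EqOn (fun x ↦ besselITerm ν m (A * x) * x ^ (-(1:ℝ) / 2) * exp (-(K * x)))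
      (fun x ↦ besselITerm ν m A * (x ^ ((2 * m + ν + 1 / 2) - 1) * exp (-(K * x))))
      (Set.Ioi 0) := by
  intro x (hx : 0 < x)
  dsimp only
  rw [besselITerm_mul_right hA hx.le, show 2 * m + ν + 1 / 2 - 1 = 2 * m + ν + -1 / 2 by ring,
    rpow_add hx (2 * m + ν)]
  ring

lemma integrableOn_besselITerm_mul_rpow_mul_exp {ν A K : ℝ} (hν : -1 / 2 < ν) (hA : 0 ≤ A)
    (hK : 0 < K) (m : ℕ) :
    IntegrableOn (fun x ↦ besselITerm ν m (A * x) * x ^ (-(1:ℝ) / 2) * exp (-(K * x)))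
      (Set.Ioi 0) := by
  refine IntegrableOn.congr_fun ?_ (eqOn_besselITerm_mul_rpow_mul_exp hA m).symm measurableSet_Ioi
  have h := integrableOn_rpow_mul_exp_neg_mul_rpow (s := 2 * m + ν + 1 / 2 - 1)
    (by linarith [m.cast_nonneg (α := ℝ)]) one_pos hK
  simp only [rpow_one, neg_mul] at h
  exact h.const_mul _

lemma integral_besselITerm_mul_rpow_mul_exp {ν A K : ℝ} (hν : -1 / 2 < ν) (hA : 0 ≤ A)
    (hK : 0 < K) (m : ℕ) :
    ∫ x in Set.Ioi 0, besselITerm ν m (A * x) * x ^ (-(1:ℝ) / 2) * exp (-(K * x)) =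
      besselITerm ν m A * ((1 / K) ^ (2 * m + ν + 1 / 2) * Gamma (2 * m + ν + 1 / 2)) := by
  rw [setIntegral_congr_fun measurableSet_Ioi (eqOn_besselITerm_mul_rpow_mul_exp hA m),
    integral_const_mul,
    integral_rpow_mul_exp_neg_mul_Ioi (by linarith [m.cast_nonneg (α := ℝ)]) hK]

lemma besselITerm_mul_gamma_div_rpow_eq {ν A K : ℝ} (hν : -1 / 2 < ν) (hA : 0 < A) (hK : 0 < K)
    (m : ℕ) :
    besselITerm ν m A * ((1 / K) ^ (2 * m + ν + 1 / 2) * Gamma (2 * m + ν + 1 / 2)) =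
      2 ^ (-ν) / √K * (A ^ 2 / K ^ 2) ^ (ν / 2) * (Gamma (1 / 2 + ν) / Gamma (1 + ν)) *
        (risingFac ((1 + 2 * ν) / 4) m * risingFac ((3 + 2 * ν) / 4) m /
          (risingFac (1 + ν) m * m.factorial) * (A ^ 2 / K ^ 2) ^ m) := by
  have hΓ_num : Gamma (2 * m + ν + 1 / 2) = Gamma (1 / 2 + ν) * 4 ^ m *
      risingFac ((1 + 2 * ν) / 4) m * risingFac ((3 + 2 * ν) / 4) m := by
    rw [show 2 * m + ν + 1 / 2 = 1 / 2 + ν + 2 * m by ring,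
      Gamma_add_two_mul_natCast (by linarith)]
    ring_nf
  have hΓ_den : Gamma (m + ν + 1) = Gamma (1 + ν) * risingFac (1 + ν) m := by
    rw [show (m : ℝ) + ν + 1 = 1 + ν + m by ring,
      Gamma_add_natCast_eq_mul_risingFac (by linarith)]
  unfold besselITerm
  rw [hΓ_num, hΓ_den]
  linear_combination (Gamma (1 / 2 + ν) * risingFac ((1 + 2 * ν) / 4) m *
    risingFac ((3 + 2 * ν) / 4) m / (m.factorial * (Gamma (1 + ν) * risingFac (1 + ν) m))) *
      div_two_rpow_mul_one_div_rpow_mul_four_pow hA hK ν m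

theorem besselI_laplace_hypergeometric_general (A B ν : ℝ)
    (hA : 0 < A) (hB : 0 < B) (hν : -1/2 < ν) :
    ∫ x in Set.Ioi (0:ℝ), besselI ν (A*x) * Real.exp (-B*x) * x ^ (-(1:ℝ)/2) * Real.exp (-x)
      = (2:ℝ)^(-ν) / Real.sqrt (1+B) * (A^2 / (1+B)^2) ^ (ν/2) *
        (Real.Gamma (1/2 + ν) / Real.Gamma (1 + ν)) *
        hyp2F1 ((1 + 2*ν)/4) ((3 + 2*ν)/4) (1 + ν) (A^2 / (1+B)^2) := by
  have hK : 0 < 1 + B := by linarith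
  have hν' : -1 < ν := by linarith
  have h_integrand (x : ℝ) : besselI ν (A * x) * exp (-B * x) * x ^ (-(1:ℝ) / 2) * exp (-x) =
      ∑' m, besselITerm ν m (A * x) * x ^ (-(1:ℝ) / 2) * exp (-((1 + B) * x)) := by
    rw [besselI_eq_tsum, tsum_mul_right, tsum_mul_right,
      show -((1 + B) * x) = -B * x + -x by ring, exp_add]
    ring
  have h_nonneg (m : ℕ) : ∀ x ∈ Set.Ioi (0:ℝ),
      0 ≤ besselITerm ν m (A * x) * x ^ (-(1:ℝ) / 2) * exp (-((1 + B) * x)) := by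
    intro x (hx : 0 < x)
    have := besselITerm_pos hν' m (mul_pos hA hx)
    positivity
  have h_summable : ∀ x ∈ Set.Ioi (0:ℝ),
      Summable fun m ↦ besselITerm ν m (A * x) * x ^ (-(1:ℝ) / 2) * exp (-((1 + B) * x)) :=
    fun x hx ↦ ((summable_besselITerm hν' (mul_pos hA hx)).mul_right _).mul_right _
  simp only [h_integrand]
  rw [integral_tsum_of_nonneg (integrableOn_besselITerm_mul_rpow_mul_exp hν hA.le hK)
    (fun m ↦ ae_restrict_of_forall_mem measurableSet_Ioi (h_nonneg m))
    (ae_restrict_of_forall_mem measurableSet_Ioi h_summable)]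
  simp only [integral_besselITerm_mul_rpow_mul_exp hν hA.le hK,
    besselITerm_mul_gamma_div_rpow_eq hν hA hK]
  rw [tsum_mul_left, hyp2F1]

theorem besselI_laplace_hypergeometric (A B ν : ℝ)
    (hA : 0 < A) (hB : 0 < B) (hν : -1/2 < ν) (hAB : A ≤ 1 + B) :
    ∫ x in Set.Ioi (0:ℝ), besselI ν (A*x) * Real.exp (-B*x) * x ^ (-(1:ℝ)/2) * Real.exp (-x)
      = (2:ℝ)^(-ν) / Real.sqrt (1+B) * (A^2 / (1+B)^2) ^ (ν/2) *
        (Real.Gamma (1/2 + ν) / Real.Gamma (1 + ν)) *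
        hyp2F1 ((1 + 2*ν)/4) ((3 + 2*ν)/4) (1 + ν) (A^2 / (1+B)^2) :=
  besselI_laplace_hypergeometric_general A B ν hA hB hν
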